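/- arXiv:1710.03749 — 6 statements merged into one kernel-verified Lean document; each statement's English description precedes it below -/
import Mathlib

section
/- Let T be an O-operator on a pre-Lie algebra (g,·) associated to a representation (V;ρ,μ) and let N be a Nijenhuis operator on (g,·). Then N∘T is an O-operator associated to (V;ρ,μ) if and only if for all u,v ∈ V: N( N(T(u))·T(v) + T(u)·N(T(v)) ) = N( T(ρ(N(T(u)))v + μ(N(T(v)))u) + N(T(ρ(T(u))v + μ(T(v))u)) ). If in addition N is invertible and N∘T is an O-operator, then T and N∘T are compatible O-operators. -/
variable {K : Type*} [Field K] [CharZero K]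
variable {g : Type*} [AddCommGroup g] [Module K g]
variable {V : Type*} [AddCommGroup V] [Module K V]

/-- The pre-Lie identity for a bilinear multiplication. -/
def IsPreLie (mul : g →ₗ[K] g →ₗ[K] g) : Prop :=
  ∀ x y z : g, mul (mul x y) z - mul x (mul y z) = mul (mul y x) z - mul y (mul x z)

/-- A Nijenhuis operator on a pre-Lie algebra. -/
def IsNijenhuis (mul : g →ₗ[K] g →ₗ[K] g) (N : g →ₗ[K] g) : Prop :=
  ∀ x y : g, mul (N x) (N y) = N (mul (N x) y + mul x (N y) - N (mul x y))

/-- A representation `(V; ρ, μ)` of a pre-Lie algebra `(g, mul)`. -/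
def IsRep (mul : g →ₗ[K] g →ₗ[K] g) (ρ μ : g →ₗ[K] Module.End K V) : Prop :=
  (∀ (x y : g) (v : V), ρ (mul x y - mul y x) v = ρ x (ρ y v) - ρ y (ρ x v)) ∧
  (∀ (x y : g) (v : V), ρ x (μ y v) - μ y (ρ x v) = μ (mul x y) v - μ y (μ x v))

/-- An `O`-operator on a pre-Lie algebra associated to a representation. -/
def IsOOp (mul : g →ₗ[K] g →ₗ[K] g) (ρ μ : g →ₗ[K] Module.End K V)
    (T : V →ₗ[K] g) : Prop :=
  ∀ u v : V, mul (T u) (T v) = T (ρ (T u) v + μ (T v) u)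

/-- Two `O`-operators are compatible if every linear combination is an `O`-operator. -/
def OCompat (mul : g →ₗ[K] g →ₗ[K] g) (ρ μ : g →ₗ[K] Module.End K V)
    (T₁ T₂ : V →ₗ[K] g) : Prop :=
  ∀ k₁ k₂ : K, IsOOp mul ρ μ (k₁ • T₁ + k₂ • T₂)

/-- For an `O`-operator `T` and a Nijenhuis operator `N`, `N ∘ T` is an `O`-operator iff the
stated condition holds; and if moreover `N` is invertible and `N ∘ T` is an `O`-operator,
then `T` and `N ∘ T` are compatible. -/
theorem comp_nijenhuis_oOperator
    (mul : g →ₗ[K] g →ₗ[K] g) (hmul : IsPreLie mul)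
    (ρ μ : g →ₗ[K] Module.End K V) (hrep : IsRep mul ρ μ)
    (T : V →ₗ[K] g) (hT : IsOOp mul ρ μ T)
    (N : g →ₗ[K] g) (hN : IsNijenhuis mul N) :
    (IsOOp mul ρ μ (N ∘ₗ T) ↔
      ∀ u v : V,
        N (mul (N (T u)) (T v) + mul (T u) (N (T v)))
          = N (T (ρ (N (T u)) v + μ (N (T v)) u) + N (T (ρ (T u) v + μ (T v) u)))) ∧
    (Function.Bijective N → IsOOp mul ρ μ (N ∘ₗ T) →
      OCompat mul ρ μ T (N ∘ₗ T)) := by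
  have key : IsOOp mul ρ μ (N ∘ₗ T) → ∀ u v : V,
      N (mul (N (T u)) (T v) + mul (T u) (N (T v)))
        = N (T (ρ (N (T u)) v + μ (N (T v)) u) + N (T (ρ (T u) v + μ (T v) u))) := by
    intro hO u v
    have hnij := hN (T u) (T v)
    have ho := hO u v
    simp only [LinearMap.comp_apply] at ho
    rw [hT u v] at hnij
    rw [hnij] at ho
    simp only [map_add, map_sub] at ho ⊢
    linear_combination (norm := module) ho
  constructor
  · constructor
    · exact key
    · intro h u v
      simp only [LinearMap.comp_apply]
      have hnij := hN (T u) (T v)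
      rw [hT u v] at hnij
      have hc := h u v
      rw [hnij]
      simp only [map_add, map_sub] at hc ⊢
      linear_combination (norm := module) hc
  · intro hbij hO k₁ k₂ u v
    have hcross : mul (N (T u)) (T v) + mul (T u) (N (T v)) =
        T (ρ (N (T u)) v + μ (N (T v)) u) + N (T (ρ (T u) v + μ (T v) u)) := by
      apply hbij.injective
      rw [map_add, map_add]
      have hc := key hO u v
      simp only [map_add] at hc ⊢
      linear_combination (norm := module) hc
    have ho := hO u v
    simp only [LinearMap.comp_apply] at ho
    have ht := hT u v
    simp only [LinearMap.add_apply, LinearMap.smul_apply, LinearMap.comp_apply,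
      map_add, map_smul, smul_add]
    simp only [map_add] at hcross ho ht
    linear_combination (norm := module) (k₁ * k₁) • ht + (k₁ * k₂) • hcross + (k₂ * k₂) • ho
end

section
/- Let T1, T2 be two O-operators on a pre-Lie algebra (g,·) associated to a representation (V;ρ,μ), and suppose T2 is invertible. If T1 and T2 are compatible, then N = T1 ∘ T2⁻¹ : g → g is a Nijenhuis operator on the pre-Lie algebra (g,·). -/
/-!
Compatibility of `T₁` and `T₂` amounts to the mixed identity
`T₁u·T₂v + T₂u·T₁v = T₁(ρ(T₂u)v + μ(T₂v)u) + T₂(ρ(T₁u)v + μ(T₁v)u)`.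
Evaluated at `u = T₂⁻¹x`, `v = T₂⁻¹y`, and with `x·y = T₂(ρ(x)T₂⁻¹y + μ(y)T₂⁻¹x)`, it says that
the deformed product `Nx·y + x·Ny − N(x·y)` of `N = T₁T₂⁻¹` equals `T₂(ρ(Nx)T₂⁻¹y + μ(Ny)T₂⁻¹x)`.
Applying `N` turns `T₂` into `T₁`, and the `O`-operator identity of `T₁` gives `Nx·Ny`.
-/

variable {K : Type*} [Field K] [CharZero K]
variable {g : Type*} [AddCommGroup g] [Module K g]
variable {V : Type*} [AddCommGroup V] [Module K V]

section

omit [CharZero K]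

variable {mul : g →ₗ[K] g →ₗ[K] g} {ρ μ : g →ₗ[K] Module.End K V}

theorem IsOOp.mul_eq_of_rightInverse {T : V →ₗ[K] g} (hT : IsOOp mul ρ μ T) {S : g →ₗ[K] V}
    (hS : Function.RightInverse S T) (x y : g) :
    mul x y = T (ρ x (S y) + μ y (S x)) := by
  simpa only [hS x, hS y] using hT (S x) (S y)

theorem OCompat.mul_add_mul {T₁ T₂ : V →ₗ[K] g} (hcomp : OCompat mul ρ μ T₁ T₂)
    (h₁ : IsOOp mul ρ μ T₁) (h₂ : IsOOp mul ρ μ T₂) (u v : V) :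
    mul (T₁ u) (T₂ v) + mul (T₂ u) (T₁ v) =
      T₁ (ρ (T₂ u) v + μ (T₂ v) u) + T₂ (ρ (T₁ u) v + μ (T₁ v) u) := by
  have hsum := hcomp 1 1 u v
  have hT₁ := h₁ u v
  have hT₂ := h₂ u v
  simp only [one_smul, LinearMap.add_apply, map_add] at hsum hT₁ hT₂ ⊢
  linear_combination (norm := module) hsum - hT₁ - hT₂

theorem OCompat.deformed_mul_eq {T₁ T₂ : V →ₗ[K] g} (hcomp : OCompat mul ρ μ T₁ T₂)
    (h₁ : IsOOp mul ρ μ T₁) (h₂ : IsOOp mul ρ μ T₂) {S : g →ₗ[K] V}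
    (hTS : Function.RightInverse S T₂) (hST : Function.LeftInverse S T₂) (x y : g) :
    mul (T₁ (S x)) y + mul x (T₁ (S y)) - T₁ (S (mul x y)) =
      T₂ (ρ (T₁ (S x)) (S y) + μ (T₁ (S y)) (S x)) := by
  have hmix := hcomp.mul_add_mul h₁ h₂ (S x) (S y)
  rw [hTS x, hTS y] at hmix
  rw [h₂.mul_eq_of_rightInverse hTS x y, hST]
  simp only [map_add] at hmix ⊢
  linear_combination (norm := module) hmix

end

theorem compatible_oOperators_give_nijenhuis_general
    (mul : g →ₗ[K] g →ₗ[K] g)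
    (ρ μ : g →ₗ[K] Module.End K V)
    (T₁ T₂ : V →ₗ[K] g) (h₁ : IsOOp mul ρ μ T₁) (h₂ : IsOOp mul ρ μ T₂)
    (S : g →ₗ[K] V) (hS₁ : T₂ ∘ₗ S = LinearMap.id) (hS₂ : S ∘ₗ T₂ = LinearMap.id)
    (hcomp : OCompat mul ρ μ T₁ T₂) :
    IsNijenhuis mul (T₁ ∘ₗ S) := by
  have hTS : Function.RightInverse S T₂ := LinearMap.congr_fun hS₁
  have hST : Function.LeftInverse S T₂ := LinearMap.congr_fun hS₂
  intro x y
  simp only [LinearMap.comp_apply]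
  rw [hcomp.deformed_mul_eq h₁ h₂ hTS hST, hST]
  exact h₁ (S x) (S y)

/-- If `T₁, T₂` are compatible `O`-operators and `T₂` is invertible (with inverse `S`),
then `N = T₁ ∘ T₂⁻¹` is a Nijenhuis operator on the pre-Lie algebra. -/
theorem compatible_oOperators_give_nijenhuis
    (mul : g →ₗ[K] g →ₗ[K] g) (hmul : IsPreLie mul)
    (ρ μ : g →ₗ[K] Module.End K V) (hrep : IsRep mul ρ μ)
    (T₁ T₂ : V →ₗ[K] g) (h₁ : IsOOp mul ρ μ T₁) (h₂ : IsOOp mul ρ μ T₂)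
    (S : g →ₗ[K] V) (hS₁ : T₂ ∘ₗ S = LinearMap.id) (hS₂ : S ∘ₗ T₂ = LinearMap.id)
    (hcomp : OCompat mul ρ μ T₁ T₂) :
    IsNijenhuis mul (T₁ ∘ₗ S) :=
  compatible_oOperators_give_nijenhuis_general mul ρ μ T₁ T₂ h₁ h₂ S hS₁ hS₂ hcomp
end

section
/- Let T1, T2 be two invertible O-operators on a pre-Lie algebra (g,·) associated to a representation (V;ρ,μ). Then T1 and T2 are compatible if and only if N = T1 ∘ T2⁻¹ : g → g is a Nijenhuis operator on (g,·). -/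
variable {K : Type*} [Field K] [CharZero K]
variable {g : Type*} [AddCommGroup g] [Module K g]
variable {V : Type*} [AddCommGroup V] [Module K V]

/-- Two invertible `O`-operators `T₁, T₂` are compatible iff `N = T₁ ∘ T₂⁻¹` is a
Nijenhuis operator. -/
theorem compatible_iff_nijenhuis
    (mul : g →ₗ[K] g →ₗ[K] g) (hmul : IsPreLie mul)
    (ρ μ : g →ₗ[K] Module.End K V) (hrep : IsRep mul ρ μ)
    (T₁ T₂ : V →ₗ[K] g) (h₁ : IsOOp mul ρ μ T₁) (h₂ : IsOOp mul ρ μ T₂)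
    (S₁ : g →ₗ[K] V) (hS₁a : T₁ ∘ₗ S₁ = LinearMap.id) (hS₁b : S₁ ∘ₗ T₁ = LinearMap.id)
    (S₂ : g →ₗ[K] V) (hS₂a : T₂ ∘ₗ S₂ = LinearMap.id) (hS₂b : S₂ ∘ₗ T₂ = LinearMap.id) :
    OCompat mul ρ μ T₁ T₂ ↔ IsNijenhuis mul (T₁ ∘ₗ S₂) := by
  have e2a : ∀ x : g, T₂ (S₂ x) = x := fun x => DFunLike.congr_fun hS₂a x
  have e2b : ∀ v : V, S₂ (T₂ v) = v := fun v => DFunLike.congr_fun hS₂b v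
  have e1b : ∀ v : V, S₁ (T₁ v) = v := fun v => DFunLike.congr_fun hS₁b v
  -- the mixed compatibility condition
  have mixed_iff :
      (∀ u v : V, mul (T₁ u) (T₂ v) + mul (T₂ u) (T₁ v)
          = T₁ (ρ (T₂ u) v + μ (T₂ v) u) + T₂ (ρ (T₁ u) v + μ (T₁ v) u))
        ↔ IsNijenhuis mul (T₁ ∘ₗ S₂) := by
    constructor
    · intro hm x y
      have hx := e2a x
      have hy := e2a y
      set u := S₂ x with hu
      set v := S₂ y with hv
      simp only [LinearMap.comp_apply]
      rw [← hx, ← hy, e2b, e2b, h₂ u v, e2b, h₁ u v]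
      have := hm u v
      have : mul (T₁ u) (T₂ v) + mul (T₂ u) (T₁ v) - T₁ (ρ (T₂ u) v + μ (T₂ v) u)
          = T₂ (ρ (T₁ u) v + μ (T₁ v) u) := by
        rw [this]; abel
      rw [this, e2b]
    · intro hN u v
      have := hN (T₂ u) (T₂ v)
      simp only [LinearMap.comp_apply, e2b] at this
      rw [h₂ u v, e2b, h₁ u v] at this
      -- this : T₁ w' = T₁ (S₂ (mul (T₁ u) (T₂ v) + mul (T₂ u) (T₁ v) - T₁ w))
      have h' : ρ (T₁ u) v + μ (T₁ v) u
          = S₂ (mul (T₁ u) (T₂ v) + mul (T₂ u) (T₁ v) - T₁ (ρ (T₂ u) v + μ (T₂ v) u)) := by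
        have := congrArg S₁ this
        rwa [e1b, e1b] at this
      have h'' := congrArg T₂ h'
      rw [e2a] at h''
      simp only [map_add] at h'' ⊢
      linear_combination (norm := module) -h''
  constructor
  · intro hc
    rw [← mixed_iff]
    intro u v
    have h := hc 1 1 u v
    have H1 := h₁ u v
    have H2 := h₂ u v
    simp only [one_smul, LinearMap.add_apply, map_add, LinearMap.add_apply] at h H1 H2 ⊢
    linear_combination (norm := module) h - H1 - H2
  · intro hN k₁ k₂ u v
    have hm := mixed_iff.mpr hN u v
    have H1 := h₁ u v
    have H2 := h₂ u v
    simp only [LinearMap.add_apply, LinearMap.smul_apply, map_add, map_smul] at hm H1 H2 ⊢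
    linear_combination (norm := module) (k₁ * k₁) • H1 + (k₂ * k₂) • H2
      + (k₁ * k₂) • hm
end

section
/- Let (B,N) be a pseudo-Hessian-Nijenhuis structure on a finite-dimensional pre-Lie algebra (g,·). For k ∈ ℤ define B_k(x,y) = B(x, N^k(y)). Then for every k ∈ ℤ, B_k is a pseudo-Hessian structure on (g,·) (i.e. B_k is symmetric, nondegenerate, and satisfies B_k(x·y,z) − B_k(x,y·z) = B_k(y·x,z) − B_k(y,x·z) for all x,y,z). Furthermore, for all k,l ∈ ℤ with l ≠ 0, the pair (B_k, N^l) is again a pseudo-Hessian-Nijenhuis structure on (g,·). -/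
variable {K : Type*} [Field K] [CharZero K]
variable {g : Type*} [AddCommGroup g] [Module K g]

/-- A pseudo-Hessian structure: a symmetric nondegenerate 2-cocycle. -/
def IsPseudoHessian (mul : g →ₗ[K] g →ₗ[K] g) (B : g → g → K) : Prop :=
  (∀ x y : g, B x y = B y x) ∧
  (∀ x : g, (∀ y : g, B x y = 0) → x = 0) ∧
  (∀ x y z : g, B (mul x y) z - B x (mul y z) = B (mul y x) z - B y (mul x z))

/-- A pseudo-Hessian-Nijenhuis structure `(B, N)`: `B` is pseudo-Hessian, `N` is an invertible
Nijenhuis operator, `B(N x, y) = B(x, N y)`, and `B₁(x,y) = B(x, N y)` is a 2-cocycle. -/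
def IsPseudoHessianNijenhuis (mul : g →ₗ[K] g →ₗ[K] g) (B : g → g → K)
    (N : g ≃ₗ[K] g) : Prop :=
  IsPseudoHessian mul B ∧
  IsNijenhuis mul (N : g →ₗ[K] g) ∧
  (∀ x y : g, B (N x) y = B x (N y)) ∧
  (∀ x y z : g,
    B (mul x y) (N z) - B x (N (mul y z)) = B (mul y x) (N z) - B y (N (mul x z)))

/-!
Everything hinges on one computation. Let `M` be a Nijenhuis operator, self-adjoint for a
bilinear form `β`, such that `β` and `β(·, M ·)` are cocycles. Expanding `M²(y·z)` by the
Nijenhuis identity, the cocycle identity of `β(·, M ·)` at `(x, y, Mz)` and the difference of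
the cocycle identities of `β` and `β(·, M ·)` at `(My, x, ·)` show that `β(·, M² ·)` is a
cocycle too. With `β = B_k` and `M = N^{±1}` this propagates the cocycle property from `B_0`,
`B_1` to all `B_k`. The remaining properties follow since integer powers of `N` are Nijenhuis
and self-adjoint for `B`, and `B_k(x, N^l y) = B_{k+l}(x, y)`.
-/

namespace LinearMap

variable {R V : Type*} [CommRing R] [AddCommGroup V] [Module R V] {B : V →ₗ[R] V →ₗ[R] R}

theorem IsAdjointPair.zpow {e : V ≃ₗ[R] V} (h : IsAdjointPair B B e e) (j : ℤ) :
    IsAdjointPair B B ⇑(e ^ j) ⇑(e ^ j) := by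
  have h_inv : IsAdjointPair B B ⇑e⁻¹ ⇑e⁻¹ := fun x y => by
    simpa using (h (e.symm x) (e.symm y)).symm
  induction j using Int.induction_on with
  | zero => exact isAdjointPair_one
  | succ i ih =>
    intro x y
    rw [zpow_add_one, LinearEquiv.mul_apply, ih, h, ← LinearEquiv.mul_apply, ← zpow_one_add,
      add_comm, zpow_add_one, LinearEquiv.mul_apply]
  | pred i ih =>
    intro x y
    rw [zpow_sub_one, LinearEquiv.mul_apply, ih, h_inv, ← LinearEquiv.mul_apply,
      ← zpow_neg_one, ← zpow_add, add_comm, zpow_add, zpow_neg_one, LinearEquiv.mul_apply]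

theorem IsAdjointPair.compl₂_zpow {e : V ≃ₗ[R] V} (h : IsAdjointPair B B e e) (k j : ℤ) :
    IsAdjointPair (B.compl₂ (e ^ k : V ≃ₗ[R] V).toLinearMap)
      (B.compl₂ (e ^ k : V ≃ₗ[R] V).toLinearMap) ⇑(e ^ j) ⇑(e ^ j) := fun x y => by
  rw [compl₂_apply, compl₂_apply, h.zpow j, LinearEquiv.coe_coe, ← LinearEquiv.mul_apply,
    (Commute.zpow_zpow_self e j k).eq, LinearEquiv.mul_apply]

end LinearMap

open LinearMap

def IsHessianCocycle {R V : Type*} [CommRing R] [AddCommGroup V] [Module R V]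
    (mul : V →ₗ[R] V →ₗ[R] V) (β : V → V → R) : Prop :=
  ∀ x y z, β (mul x y) z - β x (mul y z) = β (mul y x) z - β y (mul x z)

variable {F V : Type*} [Field F] [AddCommGroup V] [Module F V] {mul : V →ₗ[F] V →ₗ[F] V}

namespace IsNijenhuis

theorem mul_pow_apply {M : Module.End F V} (hM : IsNijenhuis mul M) (q : ℕ) (x y : V) :
    mul (M x) ((M ^ q) y)
      = (M ^ q) (mul (M x) y) + M (mul x ((M ^ q) y)) - M ((M ^ q) (mul x y)) := by
  induction q generalizing y with
  | zero => simp
  | succ q ih =>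
    rw [pow_succ', Module.End.mul_apply, hM, ih]
    simp only [Module.End.mul_apply, map_add, map_sub]
    abel

theorem pow_mul_pow_apply {M : Module.End F V} (hM : IsNijenhuis mul M) (p q : ℕ) (x y : V) :
    mul ((M ^ p) x) ((M ^ q) y)
      = (M ^ q) (mul ((M ^ p) x) y) + (M ^ p) (mul x ((M ^ q) y))
        - (M ^ p) ((M ^ q) (mul x y)) := by
  induction p generalizing x with
  | zero => simp
  | succ p ih =>
    rw [pow_succ', Module.End.mul_apply, hM.mul_pow_apply, ih]
    simp only [Module.End.mul_apply, map_add, map_sub]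
    abel

theorem pow {M : Module.End F V} (hM : IsNijenhuis mul M) (n : ℕ) :
    IsNijenhuis mul (M ^ n) := fun x y => by
  rw [map_sub, map_add, hM.pow_mul_pow_apply]

theorem inv {N : V ≃ₗ[F] V} (hN : IsNijenhuis mul N) :
    IsNijenhuis mul (N⁻¹ : V ≃ₗ[F] V).toLinearMap := fun x y => by
  have h := congrArg (fun v => N.symm (N.symm v)) (hN (N.symm x) (N.symm y))
  simp only [LinearEquiv.coe_coe, LinearEquiv.apply_symm_apply, LinearEquiv.symm_apply_apply,
    map_add, map_sub] at h
  simp only [LinearEquiv.coe_coe, LinearEquiv.coe_inv, map_add, map_sub, h]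
  abel

theorem zpow {N : V ≃ₗ[F] V} (hN : IsNijenhuis mul N) (j : ℤ) :
    IsNijenhuis mul (N ^ j : V ≃ₗ[F] V).toLinearMap := by
  have h_pow (e : V ≃ₗ[F] V) (he : IsNijenhuis mul e) (n : ℕ) :
      IsNijenhuis mul (e ^ n : V ≃ₗ[F] V).toLinearMap := by
    rw [← LinearEquiv.automorphismGroup.toLinearMapMonoidHom_apply, map_pow]
    exact he.pow n
  obtain ⟨n, rfl | rfl⟩ := j.eq_nat_or_neg
  · rw [zpow_natCast]
    exact h_pow N hN n
  · rw [zpow_neg, zpow_natCast, ← inv_pow]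
    exact h_pow _ hN.inv n

end IsNijenhuis

theorem IsHessianCocycle.sq_of_isNijenhuis {β : V →ₗ[F] V →ₗ[F] F}
    {M : Module.End F V} (hM : IsNijenhuis mul M) (hadj : IsAdjointPair β β M M)
    (h₀ : IsHessianCocycle mul fun x y => β x y)
    (h₁ : IsHessianCocycle mul fun x y => β x (M y)) :
    IsHessianCocycle mul fun x y => β x (M (M y)) := by
  intro x y z
  have adj : ∀ a b, β a (M b) = β (M a) b := fun a b => (hadj a b).symm
  have nij := congrArg (β x) (hM y z)
  have c₁ := h₁ x y (M z)
  have c₀' := h₀ (M y) x (M z)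
  have c₁' := h₁ (M y) x z
  simp only [map_add, map_sub, adj] at nij c₁ c₀' c₁' ⊢
  linear_combination c₁ - nij + c₀' - c₁'

section zpow

variable {B : V →ₗ[F] V →ₗ[F] F} {N : V ≃ₗ[F] V}

theorem IsHessianCocycle.zpow_add_two_mul (hN : IsNijenhuis mul N)
    (hadj : IsAdjointPair B B N N) {k j : ℤ}
    (hk : IsHessianCocycle mul fun x y => B x ((N ^ k) y))
    (hkj : IsHessianCocycle mul fun x y => B x ((N ^ (k + j)) y)) :
    IsHessianCocycle mul fun x y => B x ((N ^ (k + 2 * j)) y) := by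
  have h := IsHessianCocycle.sq_of_isNijenhuis (β := B.compl₂ (N ^ k).toLinearMap)
    (hN.zpow j) (hadj.compl₂_zpow k j) hk
    (by simpa only [compl₂_apply, LinearEquiv.coe_coe, ← LinearEquiv.mul_apply, ← zpow_add]
      using hkj)
  simpa only [compl₂_apply, LinearEquiv.coe_coe, ← LinearEquiv.mul_apply, ← zpow_add,
    two_mul, add_assoc] using h

theorem IsHessianCocycle.zpow (hN : IsNijenhuis mul N) (hadj : IsAdjointPair B B N N)
    (h₀ : IsHessianCocycle mul fun x y => B x y)
    (h₁ : IsHessianCocycle mul fun x y => B x (N y)) (k : ℤ) :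
    IsHessianCocycle mul fun x y => B x ((N ^ k) y) := by
  let C : ℤ → Prop := fun k => IsHessianCocycle mul fun x y => B x ((N ^ k) y)
  suffices ∀ k, C k ∧ C (k + 1) from (this k).1
  intro k
  induction k using Int.induction_on with
  | zero => exact ⟨h₀, by simpa only [C, zero_add, zpow_one] using h₁⟩
  | succ i ih =>
    refine ⟨ih.2, ?_⟩
    have h := IsHessianCocycle.zpow_add_two_mul hN hadj ih.1 ih.2
    rwa [show (i : ℤ) + 2 * 1 = i + 1 + 1 by ring] at h
  | pred i ih =>
    refine ⟨?_, by rw [sub_add_cancel]; exact ih.1⟩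
    have h := IsHessianCocycle.zpow_add_two_mul (j := -1) hN hadj ih.2
      (by rw [add_neg_cancel_right]; exact ih.1)
    rwa [show -(i : ℤ) + 1 + 2 * -1 = -i - 1 by ring] at h

end zpow

theorem pseudoHessianNijenhuis_hierarchy_general
    (mul : g →ₗ[K] g →ₗ[K] g)
    (B : g →ₗ[K] g →ₗ[K] K) (N : g ≃ₗ[K] g)
    (h : IsPseudoHessianNijenhuis mul (fun x y => B x y) N) :
    (∀ k : ℤ, IsPseudoHessian mul (fun x y => B x ((N ^ k) y))) ∧
    (∀ k l : ℤ, l ≠ 0 →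
      IsPseudoHessianNijenhuis mul (fun x y => B x ((N ^ k) y)) (N ^ l)) := by
  obtain ⟨⟨hsymm, hnondeg, h₀⟩, hN, hadj, h₁⟩ := h
  replace hadj : IsAdjointPair B B N N := hadj
  have hcocycle := IsHessianCocycle.zpow hN hadj h₀ h₁
  have hB (k : ℤ) : IsPseudoHessian mul fun x y => B x ((N ^ k) y) :=
    ⟨fun x y => (hsymm x _).trans (hadj.zpow k y x),
      fun x hx => hnondeg x fun y => by
        simpa [← LinearEquiv.mul_apply, ← zpow_add] using hx ((N ^ (-k)) y),
      hcocycle k⟩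
  refine ⟨hB, fun k l _ => ⟨hB k, hN.zpow l, hadj.compl₂_zpow k l, fun x y z => ?_⟩⟩
  simpa only [← LinearEquiv.mul_apply, ← zpow_add] using hcocycle (k + l) x y z

/-- A pseudo-Hessian-Nijenhuis structure `(B, N)` produces a sequence of pseudo-Hessian
structures `B_k(x,y) = B(x, N^k(y))`, and `(B_k, N^l)` is again pseudo-Hessian-Nijenhuis. -/
theorem pseudoHessianNijenhuis_hierarchy [FiniteDimensional K g]
    (mul : g →ₗ[K] g →ₗ[K] g) (hmul : IsPreLie mul)
    (B : g →ₗ[K] g →ₗ[K] K) (N : g ≃ₗ[K] g)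
    (h : IsPseudoHessianNijenhuis mul (fun x y => B x y) N) :
    (∀ k : ℤ, IsPseudoHessian mul (fun x y => B x ((N ^ k) y))) ∧
    (∀ k l : ℤ, l ≠ 0 →
      IsPseudoHessianNijenhuis mul (fun x y => B x ((N ^ k) y)) (N ^ l)) :=
  pseudoHessianNijenhuis_hierarchy_general mul B N h
end

section
/- Let (g,·,B,N) be a finite-dimensional pseudo-Hessian-Nijenhuis pre-Lie algebra. Define B♮ : g → g* by B♮(x) = B(x,−), and let r1, r2 ∈ Sym²(g) be the symmetric tensors determined by r1♯ = (B♮)⁻¹ and r2♯ = N⁻¹ ∘ (B♮)⁻¹. Then r1 and r2 are compatible s-matrices on (g,·), and N = r1♯ ∘ (r2♯)⁻¹. -/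
variable {K : Type*} [Field K] [CharZero K]
variable {g : Type*} [AddCommGroup g] [Module K g]

/-- The `s`-matrix (solution of the `S`-equation) condition for `r` with `r♯ = rs`. -/
def IsSMatrix (mul : g →ₗ[K] g →ₗ[K] g) (rs : Module.Dual K g →ₗ[K] g) : Prop :=
  ∀ ξ η ζ : Module.Dual K g,
    -(ξ (mul (rs η) (rs ζ))) + η (mul (rs ξ) (rs ζ))
      + ζ (mul (rs ξ) (rs η) - mul (rs η) (rs ξ)) = 0

/-- Compatibility of two `s`-matrices, expressed via `r₁♯, r₂♯`. -/
def SCompat (mul : g →ₗ[K] g →ₗ[K] g) (r₁s r₂s : Module.Dual K g →ₗ[K] g) : Prop :=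
  ∀ ξ η ζ : Module.Dual K g,
    -(ξ (mul (r₁s η) (r₂s ζ) + mul (r₂s η) (r₁s ζ)))
      + η (mul (r₁s ξ) (r₂s ζ) + mul (r₂s ξ) (r₁s ζ))
      + ζ ((mul (r₁s ξ) (r₂s η) - mul (r₂s η) (r₁s ξ))
            + (mul (r₂s ξ) (r₁s η) - mul (r₁s η) (r₂s ξ))) = 0

/-- A pseudo-Hessian-Nijenhuis pre-Lie algebra gives rise to compatible `s`-matrices
`r₁♯ = (B♮)⁻¹` and `r₂♯ = N⁻¹ ∘ (B♮)⁻¹`, with `N = r₁♯ ∘ (r₂♯)⁻¹`. -/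
theorem pseudoHessianNijenhuis_gives_compatible_sMatrices [FiniteDimensional K g]
    (mul : g →ₗ[K] g →ₗ[K] g) (hmul : IsPreLie mul)
    (B : g →ₗ[K] g →ₗ[K] K) (N : g ≃ₗ[K] g)
    (h : IsPseudoHessianNijenhuis mul (fun x y => B x y) N)
    (r₁s r₂s : Module.Dual K g →ₗ[K] g)
    (hr₁a : ∀ x : g, r₁s (B x) = x)
    (hr₁b : ∀ ξ : Module.Dual K g, B (r₁s ξ) = ξ)
    (hr₂ : r₂s = (N.symm : g →ₗ[K] g) ∘ₗ r₁s) :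
    (∀ ξ η : Module.Dual K g, η (r₁s ξ) = ξ (r₁s η)) ∧
    (∀ ξ η : Module.Dual K g, η (r₂s ξ) = ξ (r₂s η)) ∧
    IsSMatrix mul r₁s ∧ IsSMatrix mul r₂s ∧ SCompat mul r₁s r₂s ∧
    Function.Bijective r₂s ∧
    (N : g →ₗ[K] g) ∘ₗ r₂s = r₁s := by
  obtain ⟨⟨hsym0, hnd0, hcoc0⟩, hNij0, hNsym0, hcoc10⟩ := h
  have hsym : ∀ x y : g, B x y = B y x := hsym0
  have hcoc : ∀ x y z : g,
      B (mul x y) z - B x (mul y z) = B (mul y x) z - B y (mul x z) := hcoc0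
  have hNsym : ∀ x y : g, B (N x) y = B x (N y) := hNsym0
  have hcoc1 : ∀ x y z : g,
      B (mul x y) (N z) - B x (N (mul y z)) = B (mul y x) (N z) - B y (N (mul x z)) := hcoc10
  have hNij : ∀ x y : g,
      mul (N x) (N y) = N (mul (N x) y + mul x (N y) - N (mul x y)) := by
    intro x y
    have := hNij0 x y
    simpa using this
  have key : ∀ (ξ : Module.Dual K g) (u : g), ξ u = B (r₁s ξ) u := by
    intro ξ u; rw [hr₁b]
  have hNr2 : ∀ ξ : Module.Dual K g, N (r₂s ξ) = r₁s ξ := by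
    intro ξ; rw [hr₂]; simp
  have key2 : ∀ (ξ : Module.Dual K g) (u : g), ξ u = B (N (r₂s ξ)) u := by
    intro ξ u; rw [hNr2, hr₁b]
  have hnijK : ∀ u v w : g, B (mul (N u) (N v)) w
      = B (mul (N u) v) (N w) + B (mul u (N v)) (N w) - B (N (mul u v)) (N w) := by
    intro u v w
    rw [hNij u v, hNsym]
    simp [map_add, map_sub]
  refine ⟨?_, ?_, ?_, ?_, ?_, ?_, ?_⟩
  · intro ξ η
    rw [key η, key ξ]
    exact hsym _ _
  · intro ξ η
    rw [key η, key ξ, hr₂]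
    simp only [LinearMap.coe_comp, Function.comp_apply, LinearEquiv.coe_coe]
    have h1 := hNsym (N.symm (r₁s η)) (N.symm (r₁s ξ))
    simp only [N.apply_symm_apply] at h1
    rw [h1]
    exact hsym _ _
  · intro ξ η ζ
    rw [key ξ, key η, key ζ]
    simp only [map_sub]
    linear_combination hcoc (r₁s ξ) (r₁s η) (r₁s ζ)
      + hsym (r₁s ζ) (mul (r₁s ξ) (r₁s η)) - hsym (r₁s ζ) (mul (r₁s η) (r₁s ξ))
  · intro ξ η ζ
    rw [key2 ξ, key2 η, key2 ζ]
    simp only [map_sub]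
    set a := r₂s ξ; set b := r₂s η; set c := r₂s ζ
    linear_combination hcoc1 a b c - hNsym a (mul b c) + hNsym b (mul a c)
      + hsym (N c) (mul a b) - hsym (N c) (mul b a)
  · intro ξ η ζ
    rw [key ξ, key η, key ζ, ← hNr2 ξ, ← hNr2 η, ← hNr2 ζ]
    simp only [map_add, map_sub]
    set a := r₂s ξ; set b := r₂s η; set c := r₂s ζ
    linear_combination (-(hcoc1 c a (N b)) + hcoc1 c (N b) a + hcoc (N a) b (N c)
      - hnijK a c b
      - hNsym c (mul (N b) a) + hNsym c (mul a (N b))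
      + hsym (N c) (mul (N a) b) - hsym (N c) (mul b (N a))
      - hsym b (mul (N a) (N c))
      + hNsym (N b) (mul c a)
      + hsym (N b) (mul (N a) c) + hsym (N b) (mul a (N c))
      + hNsym (mul a c) (N b)
      - hsym (N (N b)) (mul c a)
      + hsym (N a) (mul c (N b)) - hsym (N a) (mul (N b) c)
      - hNsym a (mul c (N b)))
  · constructor
    · intro ξ η hh
      rw [hr₂] at hh
      simp only [LinearMap.coe_comp, Function.comp_apply, LinearEquiv.coe_coe] at hh
      have h2 : r₁s ξ = r₁s η := N.symm.injective hh
      rw [← hr₁b ξ, ← hr₁b η, h2]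
    · intro x
      refine ⟨B (N x), ?_⟩
      rw [hr₂]
      simp only [LinearMap.coe_comp, Function.comp_apply, LinearEquiv.coe_coe]
      rw [hr₁a]
      exact N.symm_apply_apply x
  · rw [hr₂]
    ext ξ
    simp
end

section
/- Let (g,[·,·]) be a finite-dimensional Lie algebra with a nondegenerate skew-symmetric 2-cocycle ω (i.e. ω([x,y],z) + ω([z,x],y) + ω([y,z],x) = 0), and let · be the pre-Lie product on g determined by ω(x·y, z) = −ω(y, [x,z]). Let N be a Nijenhuis operator on the Lie algebra (g,[·,·]) with N² = Id, dim ker(N+Id) = dim ker(N−Id), and ω(N(x),y) = −ω(x,N(y)) for all x,y (a para-Kähler Lie algebra). Then: (i) N is a Nijenhuis operator on the pre-Lie algebra (g,·); (ii) ω is a 2-cocycle of the deformed Lie algebra (g,[·,·]_N), where [x,y]_N = [N(x),y] + [x,N(y)] − N([x,y]), so (g,[·,·]_N, ω, N) is again a para-Kähler Lie algebra; (iii) the deformed pre-Lie product x ·_N y = N(x)·y + x·N(y) − N(x·y) satisfies ω(x ·_N y, z) = −ω(y, [x,z]_N), i.e. ·_N is the pre-Lie product associated to the symplectic Lie algebra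 (g,[·,·]_N, ω). -/
variable {K : Type*} [Field K] [CharZero K]
variable {g : Type*} [AddCommGroup g] [Module K g]

/-- The deformed product `x ·_N y = N(x)·y + x·N(y) − N(x·y)`. -/
def nijDeform (mul : g →ₗ[K] g →ₗ[K] g) (N : g →ₗ[K] g) (x y : g) : g :=
  mul (N x) y + mul x (N y) - N (mul x y)

/-- The deformed Lie bracket `[x,y]_N = [N x, y] + [x, N y] − N [x,y]`. -/
def lieDeform (br : g →ₗ[K] g →ₗ[K] g) (N : g →ₗ[K] g) (x y : g) : g :=
  br (N x) y + br x (N y) - N (br x y)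

/-- For a para-Kähler Lie algebra `(g, [·,·], ω, N)` with associated pre-Lie product `·`:
(i) `N` is a Nijenhuis operator on the pre-Lie algebra `(g,·)`;
(ii) `ω` is a 2-cocycle of the deformed Lie algebra `(g, [·,·]_N)` and `N` is a Nijenhuis
operator for `[·,·]_N`, so `(g, [·,·]_N, ω, N)` is again para-Kähler;
(iii) `ω(x ·_N y, z) = −ω(y, [x,z]_N)`, i.e. `·_N` is the pre-Lie product associated to the
symplectic Lie algebra `(g, [·,·]_N, ω)`. -/
theorem paraKahler_deformation [FiniteDimensional K g]
    (br : g →ₗ[K] g →ₗ[K] g)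
    (hskew : ∀ x y : g, br x y = -br y x)
    (hjac : ∀ x y z : g, br (br x y) z + br (br y z) x + br (br z x) y = 0)
    (ω : g →ₗ[K] g →ₗ[K] K)
    (hωskew : ∀ x y : g, ω x y = -ω y x)
    (hωnd : ∀ x : g, (∀ y : g, ω x y = 0) → x = 0)
    (hωcocycle : ∀ x y z : g, ω (br x y) z + ω (br z x) y + ω (br y z) x = 0)
    (mul : g →ₗ[K] g →ₗ[K] g)
    (hmulω : ∀ x y z : g, ω (mul x y) z = -ω y (br x z))
    (N : g →ₗ[K] g)
    (hNlie : ∀ x y : g, br (N x) (N y) = N (lieDeform br N x y))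
    (hN2 : N ∘ₗ N = LinearMap.id)
    (hdim : Module.finrank K (LinearMap.ker (N + LinearMap.id))
      = Module.finrank K (LinearMap.ker (N - LinearMap.id)))
    (hNω : ∀ x y : g, ω (N x) y = -ω x (N y)) :
    IsNijenhuis mul N ∧
    ((∀ x y z : g,
        ω (lieDeform br N x y) z + ω (lieDeform br N z x) y + ω (lieDeform br N y z) x = 0) ∧
     (∀ x y : g,
        lieDeform br N (N x) (N y)
          = N (lieDeform br N (N x) y + lieDeform br N x (N y) - N (lieDeform br N x y)))) ∧
    (∀ x y z : g, ω (nijDeform mul N x y) z = -ω y (lieDeform br N x z)) := by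
  have hNN : ∀ x : g, N (N x) = x := fun x => LinearMap.congr_fun hN2 x
  have hωext : ∀ a b : g, (∀ z : g, ω a z = ω b z) → a = b := by
    intro a b h
    have h0 : ∀ z : g, ω (a - b) z = 0 := by
      intro z
      simp [LinearMap.sub_apply, h z]
    exact sub_eq_zero.mp (hωnd _ h0)
  have key : ∀ x y : g, br (N x) (N y) = N (br (N x) y + br x (N y) - N (br x y)) := by
    intro x y
    simpa [lieDeform] using hNlie x y
  refine ⟨?_, ⟨?_, ?_⟩, ?_⟩
  · intro x y
    apply hωext
    intro z
    simp only [map_add, map_sub, LinearMap.add_apply, LinearMap.sub_apply, hNN]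
    have e5 := congrArg (fun w => ω y w) (hNlie x z)
    simp only [lieDeform, map_add, map_sub, hNN] at e5
    linear_combination hmulω (N x) (N y) z - hNω (mul (N x) y) z + hmulω (N x) y (N z)
      - e5 - hNω y (br (N x) z) - hNω y (br x (N z)) - hNω (mul x (N y)) z
      + hmulω x (N y) (N z) + hmulω x y z
  · intro x y z
    simp only [lieDeform, map_add, map_sub, LinearMap.add_apply, LinearMap.sub_apply]
    linear_combination hωcocycle (N x) y z + hωcocycle x (N y) z + hωcocycle x y (N z)
      - hNω (br y z) x - hNω (br z x) y - hNω (br x y) z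
  · intro x y
    simp only [lieDeform, key, hNN, map_add, map_sub]
    abel
  · intro x y z
    simp only [nijDeform, lieDeform, map_add, map_sub, LinearMap.add_apply,
      LinearMap.sub_apply]
    linear_combination hmulω (N x) y z + hmulω x (N y) z - hNω (mul x y) z
      + hmulω x y (N z) - hNω y (br x z)
end
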